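/- arXiv:1412.7321 — 4 statements merged into one kernel-verified Lean document; each statement's English description precedes it below -/
import Mathlib

section
/- Fix an integer k ≥ 2. Let μ : ℝ → E be a smooth curve with μ(0) = x ∈ O, and define d : ℝ × ℝ → E by d(t,s) = Σ_{i=0}^{k-1} (t^i/i!)·(μ^(i)(0) + s·μ^(i+1)(0)) (so the i = 0 term is x + s·μ'(0), and d(t,s) ∈ O for (t,s) near (0,0) by continuity). Then ∂/∂s|_{s=0} [ ∂^{k-1}/∂t^{k-1}|_{t=0} f(d(t,s)) ] = (f∘μ)^(k)(0). -/
/-!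
For each fixed `s`, the curve `t ↦ d t s` is the Taylor polynomial of order `k - 1` at `0` of
`t ↦ μ t + s • μ' t`, and the `n`-th derivative of `f ∘ c` at a point depends only on the `n`-jet
of `c` there, so both curves give the same `(k - 1)`-st derivative at `t = 0`. After this
replacement the derivative in `s` can be moved inside the `t`-derivatives (symmetry of second
derivatives, iterated), and `∂/∂s|_{s=0} f (μ t + s • μ' t) = Df(μ t) (μ' t) = (f ∘ μ)' t`.
-/

open Filter Topology Set
open scoped ContDiff Nat

section

variable {E : Type*} [NormedAddCommGroup E] [NormedSpace ℝ E]

lemma iteratedDeriv_sum_pow_div_factorial_smul (a : ℕ → E) {j k : ℕ} (hj : j < k) :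
    iteratedDeriv j (fun t : ℝ => ∑ i ∈ Finset.range k, (t ^ i / (i ! : ℝ)) • a i) 0 = a j := by
  rw [iteratedDeriv_fun_sum fun i _ => by fun_prop]
  have h : ∀ i ∈ Finset.range k, iteratedDeriv j (fun t : ℝ => (t ^ i / (i ! : ℝ)) • a i) 0
      = if j = i then a i else 0 := by
    intro i _
    rw [iteratedDeriv_smul_const (by fun_prop), iteratedDeriv_div_const,
      iteratedDeriv_fun_pow_zero]
    split_ifs <;> simp_all [Nat.factorial_ne_zero]
  rw [Finset.sum_congr rfl h, Finset.sum_ite_eq]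
  simp [hj]

lemma iteratedDeriv_add_smul_deriv {μ : ℝ → E} (hμ : ContDiff ℝ ∞ μ) (s : ℝ) (j : ℕ) (t : ℝ) :
    iteratedDeriv j (fun t => μ t + s • deriv μ t) t
      = iteratedDeriv j μ t + s • iteratedDeriv (j + 1) μ t := by
  have hle : ((j : ℕ∞) : WithTop ℕ∞) ≤ ∞ := mod_cast le_top
  have hμ' : ContDiff ℝ ∞ (deriv μ) := (contDiff_infty_iff_deriv.mp hμ).2
  rw [iteratedDeriv_fun_add (hμ.of_le hle).contDiffAt ((hμ'.const_smul s).of_le hle).contDiffAt,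
    iteratedDeriv_fun_const_smul_field, ← iteratedDeriv_succ']

lemma iteratedDeriv_prodMk {F G : Type*} [NormedAddCommGroup F] [NormedSpace ℝ F]
    [NormedAddCommGroup G] [NormedSpace ℝ G] {c : ℝ → F} {d : ℝ → G} {n : ℕ} {t : ℝ}
    (hc : ContDiffAt ℝ n c t) (hd : ContDiffAt ℝ n d t) :
    iteratedDeriv n (fun t => (c t, d t)) t = (iteratedDeriv n c t, iteratedDeriv n d t) := by
  simp only [iteratedDeriv_eq_iteratedFDeriv, iteratedFDeriv_prodMk hc hd le_rfl]
  rfl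

section Jet

variable {X : Type*} [NormedAddCommGroup X] [NormedSpace ℝ X] {Φ : X → E} {V : Set X}

lemma deriv_comp_eventuallyEq (hV : IsOpen V) (hΦ : DifferentiableOn ℝ Φ V) {c : ℝ → X}
    (hc : Differentiable ℝ c) {t₀ : ℝ} (ht₀ : c t₀ ∈ V) :
    deriv (fun t => Φ (c t)) =ᶠ[𝓝 t₀] fun t => fderiv ℝ Φ (c t) (deriv c t) := by
  filter_upwards [hc.continuous.continuousAt.preimage_mem_nhds (hV.mem_nhds ht₀)] with t ht
  exact ((hΦ.differentiableAt (hV.mem_nhds ht)).hasFDerivAt.comp_hasDerivAt t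
    (hc t).hasDerivAt).deriv

lemma ContDiffOn.fderiv_apply_fst_snd (hV : IsOpen V) (hΦ : ContDiffOn ℝ ∞ Φ V) :
    ContDiffOn ℝ ∞ (fun p : X × X => fderiv ℝ Φ p.1 p.2) (V ×ˢ univ) :=
  ((hΦ.fderiv_of_isOpen hV le_rfl).comp contDiffOn_fst fun _ hp => hp.1).clm_apply contDiffOn_snd

theorem iteratedDeriv_comp_eq_of_iteratedDeriv_eq (hV : IsOpen V) (hΦ : ContDiffOn ℝ ∞ Φ V)
    {c₁ c₂ : ℝ → X} (hc₁ : ContDiff ℝ ∞ c₁) (hc₂ : ContDiff ℝ ∞ c₂) {t₀ : ℝ} (ht₀ : c₁ t₀ ∈ V)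
    {n : ℕ} (hjet : ∀ j ≤ n, iteratedDeriv j c₁ t₀ = iteratedDeriv j c₂ t₀) :
    iteratedDeriv n (fun t => Φ (c₁ t)) t₀ = iteratedDeriv n (fun t => Φ (c₂ t)) t₀ := by
  induction n generalizing X with
  | zero => simpa using congrArg Φ (hjet 0 le_rfl)
  | succ n ih =>
    have hc₂t₀ : c₂ t₀ ∈ V := by
      have h0 : c₁ t₀ = c₂ t₀ := by simpa using hjet 0 (Nat.zero_le _)
      exact h0 ▸ ht₀
    have hd₁ : ContDiff ℝ ∞ (deriv c₁) := (contDiff_infty_iff_deriv.mp hc₁).2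
    have hd₂ : ContDiff ℝ ∞ (deriv c₂) := (contDiff_infty_iff_deriv.mp hc₂).2
    have hΦd := hΦ.differentiableOn (by simp)
    -- `(Φ ∘ c)' = DΦ' ∘ (c, c')` with `DΦ' (y, v) = DΦ(y) v`, and the `n`-jet of `(c, c')`
    -- is the `(n + 1)`-jet of `c`.
    rw [iteratedDeriv_succ', iteratedDeriv_succ',
      (deriv_comp_eventuallyEq hV hΦd (hc₁.differentiable (by simp)) ht₀).iteratedDeriv_eq,
      (deriv_comp_eventuallyEq hV hΦd (hc₂.differentiable (by simp)) hc₂t₀).iteratedDeriv_eq]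
    refine ih (hV.prod isOpen_univ) (hΦ.fderiv_apply_fst_snd hV) (hc₁.prodMk hd₁)
      (hc₂.prodMk hd₂) ⟨ht₀, trivial⟩ fun j hj => ?_
    have hle : ((j : ℕ∞) : WithTop ℕ∞) ≤ ∞ := mod_cast le_top
    rw [iteratedDeriv_prodMk (hc₁.of_le hle).contDiffAt (hd₁.of_le hle).contDiffAt,
      iteratedDeriv_prodMk (hc₂.of_le hle).contDiffAt (hd₂.of_le hle).contDiffAt,
      ← iteratedDeriv_succ', ← iteratedDeriv_succ', hjet j hj.step,
      hjet (j + 1) (Nat.succ_le_succ hj)]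

end Jet

noncomputable def partialFst (G : ℝ × ℝ → E) (p : ℝ × ℝ) : E := deriv (fun t => G (t, p.2)) p.1

noncomputable def partialSnd (G : ℝ × ℝ → E) (p : ℝ × ℝ) : E := deriv (fun s => G (p.1, s)) p.2

variable {G H : ℝ × ℝ → E} {U : Set (ℝ × ℝ)} {p : ℝ × ℝ}

lemma partialFst_eq_fderiv (hG : DifferentiableAt ℝ G p) :
    partialFst G p = fderiv ℝ G p (1, 0) :=
  (hG.hasFDerivAt.comp_hasDerivAt p.1 ((hasDerivAt_id _).prodMk (hasDerivAt_const _ _))).deriv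

lemma partialSnd_eq_fderiv (hG : DifferentiableAt ℝ G p) :
    partialSnd G p = fderiv ℝ G p (0, 1) :=
  (hG.hasFDerivAt.comp_hasDerivAt p.2 ((hasDerivAt_const _ _).prodMk (hasDerivAt_id _))).deriv

lemma _root_.Set.EqOn.partialFst (h : EqOn G H U) (hU : IsOpen U) :
    EqOn (partialFst G) (partialFst H) U := fun p hp => by
  refine Filter.EventuallyEq.deriv_eq ?_
  filter_upwards [(continuous_id.prodMk continuous_const).continuousAt.preimage_mem_nhds
    (hU.mem_nhds hp)] with t ht using h ht

lemma _root_.Set.EqOn.partialSnd (h : EqOn G H U) (hU : IsOpen U) :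
    EqOn (partialSnd G) (partialSnd H) U := fun p hp => by
  refine Filter.EventuallyEq.deriv_eq ?_
  filter_upwards [(continuous_const.prodMk continuous_id).continuousAt.preimage_mem_nhds
    (hU.mem_nhds hp)] with t ht using h ht

lemma _root_.Set.EqOn.partialFst_iterate (h : EqOn G H U) (hU : IsOpen U) (n : ℕ) :
    EqOn (partialFst^[n] G) (partialFst^[n] H) U := by
  induction n with
  | zero => exact h
  | succ n ih =>
    simpa only [Function.iterate_succ_apply'] using ih.partialFst hU

lemma _root_.ContDiffOn.partialFst (hU : IsOpen U) (hG : ContDiffOn ℝ ∞ G U) :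
    ContDiffOn ℝ ∞ (partialFst G) U :=
  ((hG.fderiv_of_isOpen hU le_rfl).clm_apply contDiffOn_const).congr fun p hp =>
    partialFst_eq_fderiv ((hG.contDiffAt (hU.mem_nhds hp)).differentiableAt (by simp))

lemma partialSnd_partialFst_eqOn (hU : IsOpen U) (hG : ContDiffOn ℝ ∞ G U) :
    EqOn (partialSnd (partialFst G)) (partialFst (partialSnd G)) U := by
  have hdiff : ∀ p ∈ U, DifferentiableAt ℝ G p := fun p hp =>
    (hG.contDiffAt (hU.mem_nhds hp)).differentiableAt (by simp)
  have hD := hG.fderiv_of_isOpen (m := ∞) hU le_rfl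
  have h₁ : EqOn (partialFst G) (fun q => fderiv ℝ G q (1, 0)) U := fun q hq =>
    partialFst_eq_fderiv (hdiff q hq)
  have h₂ : EqOn (partialSnd G) (fun q => fderiv ℝ G q (0, 1)) U := fun q hq =>
    partialSnd_eq_fderiv (hdiff q hq)
  intro p hp
  have hDp : DifferentiableAt ℝ (fderiv ℝ G) p :=
    (hD.contDiffAt (hU.mem_nhds hp)).differentiableAt (by simp)
  rw [h₁.partialSnd hU hp, h₂.partialFst hU hp,
    partialSnd_eq_fderiv (hDp.clm_apply (differentiableAt_const _)),
    partialFst_eq_fderiv (hDp.clm_apply (differentiableAt_const _)),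
    fderiv_clm_apply hDp (differentiableAt_const _),
    fderiv_clm_apply hDp (differentiableAt_const _)]
  have hsymm : IsSymmSndFDerivAt ℝ G p :=
    (hG.contDiffAt (hU.mem_nhds hp)).isSymmSndFDerivAt (by simp [ENat.LEInfty.out])
  simpa using hsymm.eq (0, 1) (1, 0)

lemma partialSnd_partialFst_iterate_eqOn (hU : IsOpen U) (hG : ContDiffOn ℝ ∞ G U) (n : ℕ) :
    EqOn (partialSnd (partialFst^[n] G)) (partialFst^[n] (partialSnd G)) U := by
  induction n generalizing G with
  | zero => exact fun _ _ => rfl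
  | succ n ih =>
    simp only [Function.iterate_succ_apply]
    exact (ih (hG.partialFst hU)).trans
      ((partialSnd_partialFst_eqOn hU hG).partialFst_iterate hU n)

lemma iteratedDeriv_eq_partialFst_iterate (G : ℝ × ℝ → E) (n : ℕ) (t s : ℝ) :
    iteratedDeriv n (fun t => G (t, s)) t = (partialFst^[n] G) (t, s) := by
  induction n generalizing t with
  | zero => rfl
  | succ n ih =>
    rw [iteratedDeriv_succ, Function.iterate_succ_apply']
    exact congrArg (deriv · t) (funext ih)

theorem deriv_iteratedDeriv_comm {G : ℝ × ℝ → E} {U : Set (ℝ × ℝ)} (hU : IsOpen U)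
    (hG : ContDiffOn ℝ ∞ G U) {t₀ s₀ : ℝ} (h : (t₀, s₀) ∈ U) (n : ℕ) :
    deriv (fun s => iteratedDeriv n (fun t => G (t, s)) t₀) s₀
      = iteratedDeriv n (fun t => deriv (fun s => G (t, s)) s₀) t₀ := by
  simp only [iteratedDeriv_eq_partialFst_iterate G n]
  exact (partialSnd_partialFst_iterate_eqOn hU hG n h).trans
    (iteratedDeriv_eq_partialFst_iterate (partialSnd G) n t₀ s₀).symm

end

/-- **Lemma (mixed partial along the canonical 2-parameter deformation).**
Let `f` be smooth on an open set `O ⊆ E`, let `μ : ℝ → E` be a smooth curve with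
`μ 0 = x ∈ O`, and set
`d t s = ∑_{i=0}^{k-1} (t^i / i!) • (μ^(i)(0) + s • μ^(i+1)(0))`.
Then `∂/∂s |_{s=0} [ ∂^{k-1}/∂t^{k-1} |_{t=0} f (d t s) ] = (f ∘ μ)^(k)(0)`. -/
theorem mixed_partial_eq_iteratedDeriv_comp
    {E : Type*} [NormedAddCommGroup E] [NormedSpace ℝ E]
    (O : Set E) (hO : IsOpen O) (f : E → E) (hf : ContDiffOn ℝ (⊤ : ℕ∞) f O)
    (k : ℕ) (hk : 2 ≤ k)
    (μ : ℝ → E) (hμ : ContDiff ℝ (⊤ : ℕ∞) μ) (x : E) (hx : x ∈ O) (hμ0 : μ 0 = x) :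
    let d : ℝ → ℝ → E := fun t s =>
      ∑ i ∈ Finset.range k,
        (t ^ i / (Nat.factorial i : ℝ)) • (iteratedDeriv i μ 0 + s • iteratedDeriv (i + 1) μ 0)
    deriv (fun s => iteratedDeriv (k - 1) (fun t => f (d t s)) 0) 0
      = iteratedDeriv k (fun t => f (μ t)) 0 := by
  intro d
  obtain ⟨n, rfl⟩ : ∃ n, k = n + 1 := ⟨k - 1, by omega⟩
  have hμ' : ContDiff ℝ ∞ (deriv μ) := (contDiff_infty_iff_deriv.mp hμ).2
  set c : ℝ × ℝ → E := fun p => μ p.1 + p.2 • deriv μ p.1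
  have hc : ContDiff ℝ ∞ c :=
    (hμ.comp contDiff_fst).add (contDiff_snd.smul (hμ'.comp contDiff_fst))
  have hU : IsOpen (c ⁻¹' O) := hO.preimage hc.continuous
  have h0U : ((0 : ℝ), (0 : ℝ)) ∈ c ⁻¹' O := by simpa [c, hμ0] using hx
  have hjet : (fun s => iteratedDeriv n (fun t => f (d t s)) 0)
      =ᶠ[𝓝 0] fun s => iteratedDeriv n (fun t => f (c (t, s))) 0 := by
    filter_upwards [(continuous_const.prodMk continuous_id).continuousAt.preimage_mem_nhds
      (hU.mem_nhds h0U)] with s hs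
    refine (iteratedDeriv_comp_eq_of_iteratedDeriv_eq hO hf (hμ.add (hμ'.const_smul s))
      (by fun_prop) hs fun j hj => ?_).symm
    rw [iteratedDeriv_sum_pow_div_factorial_smul _ (Nat.lt_succ_of_le hj),
      iteratedDeriv_add_smul_deriv hμ]
  have hchain : (fun t => deriv (fun s => f (c (t, s))) 0) =ᶠ[𝓝 0] deriv (fun t => f (μ t)) := by
    have hfd : DifferentiableOn ℝ f O := hf.differentiableOn (by simp)
    have hμx : μ 0 ∈ O := hμ0 ▸ hx
    filter_upwards [deriv_comp_eventuallyEq hO hfd (hμ.differentiable (by simp)) hμx,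
      hμ.continuous.continuousAt.preimage_mem_nhds (hO.mem_nhds hμx)] with t hcomp ht
    rw [hcomp]
    -- the left side is `lineDeriv ℝ f (μ t) (deriv μ t)` by definition
    exact (hfd.differentiableAt (hO.mem_nhds ht)).lineDeriv_eq_fderiv (v := deriv μ t)
  rw [Nat.add_sub_cancel, hjet.deriv_eq,
    deriv_iteratedDeriv_comm (G := fun p => f (c p)) hU (hf.comp hc.contDiffOn fun _ h => h) h0U,
    hchain.iteratedDeriv_eq, ← iteratedDeriv_succ']
end

section
/- For every integer j with 1 ≤ j ≤ k, the mixed partial derivative ∂/∂h ∂/∂s ∂^{j-1}/∂t^{j-1} [ Σ_{i=1}^{k} f(c_i(t,s,h)) ] evaluated at t = s = h = 0 equals ∂/∂s ∂^{j}/∂t^{j} [ f(c(t,s)) ] evaluated at t = s = 0. -/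
/-!
Every curve `c_i` is `c + h • v_i` with `v_i = i t^{i-1} ξ_i`, and the `v_i` add up to `∂_t c`.
By the chain rule, `∂_h ∑ f (c_i) = ∂_t f (c)` on the plane `h = 0`. Since `∑ f (c_i)` is smooth
near the origin, Schwarz's theorem lets `∂_h` pass through `∂_s ∂_t^{j-1}`, which turns the left
side into `∂_s ∂_t^{j-1} ∂_t f (c)`.
-/

open Set Filter Topology

theorem deriv_sum_comp_add_smul {E F ι : Type*} [NormedAddCommGroup E] [NormedSpace ℝ E]
    [NormedAddCommGroup F] [NormedSpace ℝ F] {f : E → F} {γ : ℝ → E} {t : ℝ} {s : Finset ι}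
    {v : ι → E} (hf : DifferentiableAt ℝ f (γ t)) (hγ : HasDerivAt γ (∑ i ∈ s, v i) t) :
    deriv (fun h : ℝ => ∑ i ∈ s, f (γ t + h • v i)) 0 = deriv (fun t => f (γ t)) t := by
  have hline : ∀ i, HasDerivAt (fun h : ℝ => f (γ t + h • v i)) (fderiv ℝ f (γ t) (v i)) 0 := by
    intro i
    have hγv := ((hasDerivAt_id (0 : ℝ)).smul_const (v i)).const_add (γ t)
    simp only [id, one_smul] at hγv
    exact hf.hasFDerivAt.comp_hasDerivAt_of_eq 0 hγv (by simp)
  rw [(HasDerivAt.fun_sum fun i _ => hline i).deriv, ← map_sum]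
  exact (hf.hasFDerivAt.comp_hasDerivAt t hγ).deriv.symm

theorem exists_isOpen_contDiffOn_sum_comp {P E F ι : Type*} [NormedAddCommGroup P]
    [NormedSpace ℝ P] [NormedAddCommGroup E] [NormedSpace ℝ E] [NormedAddCommGroup F]
    [NormedSpace ℝ F] {O : Set E} (hO : IsOpen O) {f : E → F} (hf : ContDiffOn ℝ (⊤ : ℕ∞) f O)
    {s : Finset ι} {γ : ι → P → E} (hγ : ∀ i, ContDiff ℝ (⊤ : ℕ∞) (γ i)) {p : P}
    (hp : ∀ i ∈ s, γ i p ∈ O) :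
    ∃ U, IsOpen U ∧ p ∈ U ∧ ContDiffOn ℝ (⊤ : ℕ∞) (fun q => ∑ i ∈ s, f (γ i q)) U :=
  ⟨⋂ i ∈ s, γ i ⁻¹' O, isOpen_biInter_finset fun i _ => hO.preimage (hγ i).continuous,
    mem_iInter₂.2 hp,
    ContDiffOn.sum fun i hi => hf.comp (hγ i).contDiffOn fun _ hq => mem_iInter₂.1 hq i hi⟩

section DirDeriv

variable {P E : Type*} [NormedAddCommGroup P] [NormedSpace ℝ P]
  [NormedAddCommGroup E] [NormedSpace ℝ E]

/-- Defined through `lineDeriv` rather than `fderiv`, so that slicing along a line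
(`deriv_comp_add_smul`) needs no differentiability. -/
noncomputable def dirDeriv (v : P) (Φ : P → E) : P → E := fun p => lineDeriv ℝ Φ p v

theorem deriv_comp_add_smul (Φ : P → E) (p v : P) (t : ℝ) :
    deriv (fun t => Φ (p + t • v)) t = dirDeriv v Φ (p + t • v) := by
  simp only [dirDeriv, lineDeriv, add_assoc, ← add_smul]
  rw [deriv_comp_const_add (fun t => Φ (p + t • v)), add_zero]

theorem iteratedDeriv_comp_add_smul (Φ : P → E) (p v : P) (n : ℕ) :
    iteratedDeriv n (fun t : ℝ => Φ (p + t • v)) = fun t => (dirDeriv v)^[n] Φ (p + t • v) := by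
  induction n with
  | zero => rfl
  | succ n ih =>
    ext t
    rw [iteratedDeriv_succ, ih, deriv_comp_add_smul, Function.iterate_succ_apply']

variable {U : Set P} {Φ : P → E}

theorem eqOn_dirDeriv_fderiv (hU : IsOpen U) (hΦ : ContDiffOn ℝ (⊤ : ℕ∞) Φ U) (v : P) :
    EqOn (dirDeriv v Φ) (fun p => fderiv ℝ Φ p v) U := fun p hp =>
  ((hΦ.contDiffAt (hU.mem_nhds hp)).differentiableAt (by norm_cast)).lineDeriv_eq_fderiv

theorem contDiffOn_dirDeriv (hU : IsOpen U) (hΦ : ContDiffOn ℝ (⊤ : ℕ∞) Φ U) (v : P) :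
    ContDiffOn ℝ (⊤ : ℕ∞) (dirDeriv v Φ) U :=
  ((hΦ.fderiv_of_isOpen hU (m := (⊤ : ℕ∞)) (by norm_cast)).clm_apply contDiffOn_const).congr
    (eqOn_dirDeriv_fderiv hU hΦ v)

theorem contDiffOn_iterate_dirDeriv (hU : IsOpen U) (hΦ : ContDiffOn ℝ (⊤ : ℕ∞) Φ U)
    (v : P) (n : ℕ) : ContDiffOn ℝ (⊤ : ℕ∞) ((dirDeriv v)^[n] Φ) U := by
  induction n with
  | zero => exact hΦ
  | succ n ih => rw [Function.iterate_succ_apply']; exact contDiffOn_dirDeriv hU ih v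

theorem dirDeriv_comm (hU : IsOpen U) (hΦ : ContDiffOn ℝ (⊤ : ℕ∞) Φ U) (v w : P) {p : P}
    (hp : p ∈ U) : dirDeriv v (dirDeriv w Φ) p = dirDeriv w (dirDeriv v Φ) p := by
  have hsymm : IsSymmSndFDerivAt ℝ Φ p :=
    (hΦ.contDiffAt (hU.mem_nhds hp)).isSymmSndFDerivAt
      (by rw [minSmoothness_of_isRCLikeNormedField]; norm_cast)
  have hD : DifferentiableAt ℝ (fderiv ℝ Φ) p :=
    ((hΦ.fderiv_of_isOpen hU (m := (⊤ : ℕ∞)) (by norm_cast)).contDiffAt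
      (hU.mem_nhds hp)).differentiableAt (by norm_cast)
  have hsnd : ∀ a b, dirDeriv a (dirDeriv b Φ) p = fderiv ℝ (fderiv ℝ Φ) p a b := by
    intro a b
    rw [dirDeriv,
      ((eqOn_dirDeriv_fderiv hU hΦ b).eventuallyEq_of_mem (hU.mem_nhds hp)).lineDeriv_eq,
      (hD.clm_apply (differentiableAt_const b)).lineDeriv_eq_fderiv,
      fderiv_clm_apply hD (differentiableAt_const b)]
    simp
  rw [hsnd, hsnd, hsymm.eq]

theorem iterate_dirDeriv_comm (hU : IsOpen U) (hΦ : ContDiffOn ℝ (⊤ : ℕ∞) Φ U) (v w : P)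
    (n : ℕ) : EqOn ((dirDeriv v)^[n] (dirDeriv w Φ)) (dirDeriv w ((dirDeriv v)^[n] Φ)) U := by
  induction n with
  | zero => exact fun _ _ => rfl
  | succ n ih =>
    intro p hp
    simp only [Function.iterate_succ_apply']
    rw [← dirDeriv_comm hU (contDiffOn_iterate_dirDeriv hU hΦ v n) v w hp]
    exact (ih.eventuallyEq_of_mem (hU.mem_nhds hp)).lineDeriv_eq

end DirDeriv

section Partials

variable {E : Type*} [NormedAddCommGroup E] [NormedSpace ℝ E]

theorem iteratedDeriv_comp_mk₁ (Φ : ℝ × ℝ × ℝ → E) (s h : ℝ) (n : ℕ) :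
    iteratedDeriv n (fun t => Φ (t, s, h)) = fun t => (dirDeriv (1, 0, 0))^[n] Φ (t, s, h) := by
  simpa using iteratedDeriv_comp_add_smul Φ (0, s, h) (1, 0, 0) n

theorem deriv_comp_mk₂ (Φ : ℝ × ℝ × ℝ → E) (t s h : ℝ) :
    deriv (fun s => Φ (t, s, h)) s = dirDeriv (0, 1, 0) Φ (t, s, h) := by
  simpa using deriv_comp_add_smul Φ (t, 0, h) (0, 1, 0) s

theorem deriv_comp_mk₃ (Φ : ℝ × ℝ × ℝ → E) (t s h : ℝ) :
    deriv (fun h => Φ (t, s, h)) h = dirDeriv (0, 0, 1) Φ (t, s, h) := by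
  simpa using deriv_comp_add_smul Φ (t, s, 0) (0, 0, 1) h

theorem deriv_deriv_iteratedDeriv_eq_of_deriv_eq {Φ : ℝ × ℝ × ℝ → E} {Ψ : ℝ → ℝ → E}
    {U : Set (ℝ × ℝ × ℝ)} (hU : IsOpen U) (h0 : 0 ∈ U) (hΦ : ContDiffOn ℝ (⊤ : ℕ∞) Φ U)
    (hΦΨ : ∀ᶠ s in 𝓝 0, deriv (fun t => Ψ t s) =ᶠ[𝓝 0] fun t => deriv (fun h => Φ (t, s, h)) 0)
    (n : ℕ) :
    deriv (fun h => deriv (fun s => iteratedDeriv n (fun t => Φ (t, s, h)) 0) 0) 0 =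
      deriv (fun s => iteratedDeriv (n + 1) (fun t => Ψ t s) 0) 0 := by
  have hRHS : (fun s => iteratedDeriv (n + 1) (fun t => Ψ t s) 0) =ᶠ[𝓝 0]
      fun s => (dirDeriv (1, 0, 0))^[n] (dirDeriv (0, 0, 1) Φ) (0, s, 0) := by
    filter_upwards [hΦΨ] with s hs
    simp only [deriv_comp_mk₃] at hs
    rw [iteratedDeriv_succ', hs.iteratedDeriv_eq, iteratedDeriv_comp_mk₁]
  have hcomm : dirDeriv (0, 0, 1) ((dirDeriv (1, 0, 0))^[n] Φ) =ᶠ[𝓝 0]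
      (dirDeriv (1, 0, 0))^[n] (dirDeriv (0, 0, 1) Φ) :=
    ((iterate_dirDeriv_comm hU hΦ _ _ n).eventuallyEq_of_mem (hU.mem_nhds h0)).symm
  simp only [iteratedDeriv_comp_mk₁, deriv_comp_mk₂, deriv_comp_mk₃]
  rw [hRHS.deriv_eq, deriv_comp_mk₂]
  exact (dirDeriv_comm hU (contDiffOn_iterate_dirDeriv hU hΦ _ n) _ _ h0).trans
    hcomm.lineDeriv_eq

end Partials

theorem mixed_partial_sum_curves_eq_s_general
    {E : Type*} [NormedAddCommGroup E] [NormedSpace ℝ E]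
    (O : Set E) (hO : IsOpen O) (f : E → E) (hf : ContDiffOn ℝ (⊤ : ℕ∞) f O)
    (k : ℕ) (x : E) (hx : x ∈ O) (y : E) (ξ : ℕ → E)
    (j : ℕ) (hj1 : 1 ≤ j) :
    let c : ℝ → ℝ → E := fun t s => x + s • y + ∑ m ∈ Finset.Icc 1 k, t ^ m • ξ m
    let cfam : ℕ → ℝ → ℝ → ℝ → E := fun i t s h =>
      if i = 1 then x + h • ξ 1 + s • y + ∑ m ∈ Finset.Icc 1 k, t ^ m • ξ m
      else x + s • y + (∑ m ∈ Finset.Icc 1 k, t ^ m • ξ m) + ((i : ℝ) * h * t ^ (i - 1)) • ξ i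
    deriv (fun h =>
        deriv (fun s =>
            iteratedDeriv (j - 1) (fun t => ∑ i ∈ Finset.Icc 1 k, f (cfam i t s h)) 0) 0) 0
      = deriv (fun s => iteratedDeriv j (fun t => f (c t s)) 0) 0 := by
  intro c cfam
  obtain ⟨n, rfl⟩ : ∃ n, j = n + 1 := ⟨j - 1, by omega⟩
  have hcfam : ∀ i t s h, cfam i t s h = c t s + h • (((i : ℝ) * t ^ (i - 1)) • ξ i) := by
    intro i t s h
    simp only [cfam, c]
    split_ifs with hi
    · subst hi
      simp only [Nat.cast_one, tsub_self, pow_zero, mul_one, one_smul]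
      abel
    · module
  have hc0 : c 0 0 = x := by
    simp only [c, zero_smul, add_zero]
    exact add_eq_left.2 (Finset.sum_eq_zero fun m hm => by
      simp [zero_pow (Nat.one_le_iff_ne_zero.1 (Finset.mem_Icc.1 hm).1)])
  obtain ⟨U, hU, h0, hΦ⟩ := exists_isOpen_contDiffOn_sum_comp hO hf (s := Finset.Icc 1 k)
    (γ := fun i (p : ℝ × ℝ × ℝ) => c p.1 p.2.1 + p.2.2 • (((i : ℝ) * p.1 ^ (i - 1)) • ξ i))
    (fun i => by simp only [c]; fun_prop) (p := 0) (fun i _ => by simp [hc0, hx])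
  have hcO : ∀ᶠ s in 𝓝 0, ∀ᶠ t in 𝓝 0, c t s ∈ O := by
    have hc : Continuous (fun q : ℝ × ℝ => c q.2 q.1) := by simp only [c]; fun_prop
    have := (hc.tendsto (0, 0)).eventually (hO.eventually_mem (hc0 ▸ hx))
    rw [nhds_prod_eq] at this
    exact this.curry
  simp only [Nat.add_sub_cancel, hcfam]
  refine deriv_deriv_iteratedDeriv_eq_of_deriv_eq (Ψ := fun t s => f (c t s)) hU h0 hΦ ?_ n
  filter_upwards [hcO] with s hs
  filter_upwards [hs] with t ht
  exact (deriv_sum_comp_add_smul (γ := fun t => c t s)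
    ((hf.differentiableOn (by norm_cast)).differentiableAt (hO.mem_nhds ht))
    ((HasDerivAt.fun_sum fun m _ => (hasDerivAt_pow m t).smul_const (ξ m)).const_add _)).symm

/-- **Lemma (first identity for the auxiliary curves `c_i`).**
With `c (t,s) = x + s•y + ∑_{m=1}^k t^m • ξ_m`,
`c_1 (t,s,h) = x + h•ξ_1 + s•y + ∑_{m=1}^k t^m • ξ_m` and, for `2 ≤ i ≤ k`,
`c_i (t,s,h) = x + s•y + ∑_{m=1}^k t^m • ξ_m + (i·h·t^{i-1}) • ξ_i`,
for every `1 ≤ j ≤ k`: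
`∂/∂h ∂/∂s ∂^{j-1}/∂t^{j-1} [∑_{i=1}^k f (c_i (t,s,h))] |₀ = ∂/∂s ∂^j/∂t^j [f (c (t,s))] |₀`. -/
theorem mixed_partial_sum_curves_eq_s
    {E : Type*} [NormedAddCommGroup E] [NormedSpace ℝ E]
    (O : Set E) (hO : IsOpen O) (f : E → E) (hf : ContDiffOn ℝ (⊤ : ℕ∞) f O)
    (k : ℕ) (hk : 1 ≤ k) (x : E) (hx : x ∈ O) (y : E) (ξ : ℕ → E)
    (j : ℕ) (hj1 : 1 ≤ j) (hjk : j ≤ k) :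
    let c : ℝ → ℝ → E := fun t s => x + s • y + ∑ m ∈ Finset.Icc 1 k, t ^ m • ξ m
    let cfam : ℕ → ℝ → ℝ → ℝ → E := fun i t s h =>
      if i = 1 then x + h • ξ 1 + s • y + ∑ m ∈ Finset.Icc 1 k, t ^ m • ξ m
      else x + s • y + (∑ m ∈ Finset.Icc 1 k, t ^ m • ξ m) + ((i : ℝ) * h * t ^ (i - 1)) • ξ i
    deriv (fun h =>
        deriv (fun s =>
            iteratedDeriv (j - 1) (fun t => ∑ i ∈ Finset.Icc 1 k, f (cfam i t s h)) 0) 0) 0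
      = deriv (fun s => iteratedDeriv j (fun t => f (c t s)) 0) 0 :=
  mixed_partial_sum_curves_eq_s_general O hO f hf k x hx y ξ j hj1
end

section
/- For every p ∈ O and all u, v, w ∈ E, g(p)(Γ_M(p)(u,v), w) = h(f(p))( Γ_N(f(p))(Df(p)u, Df(p)v), Df(p)w ) + h(f(p))( D²f(p)(u,v), Df(p)w ). (This is the key computation of the pullback of the Levi-Civita Christoffel symbols along an immersion.) -/
/-! Differentiating `g(p)(u, v) = h(f p)(Df(p) u, Df(p) v)` by the product rule gives
`Dg(p)(a, b, c) = Dh(f p)(Df a, Df b, Df c) + h(D²f(a, b), Df c) + h(Df b, D²f(a, c))`.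
In the Koszul combination of these three-term expressions the `Dh` terms form the Koszul
combination for `h`, while by the symmetry of `h(f p)` and of `D²f(p)` the second-derivative
terms cancel in pairs except for `h(D²f(u, v), Df w)`, which appears twice. -/

open ContinuousLinearMap

section ProductRule

variable {𝕜 : Type*} [NontriviallyNormedField 𝕜] {E F G H K : Type*}
  [NormedAddCommGroup E] [NormedSpace 𝕜 E] [NormedAddCommGroup F] [NormedSpace 𝕜 F]
  [NormedAddCommGroup G] [NormedSpace 𝕜 G] [NormedAddCommGroup H] [NormedSpace 𝕜 H]
  [NormedAddCommGroup K] [NormedSpace 𝕜 K]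

theorem fderiv_apply_apply {B : E → F →L[𝕜] G →L[𝕜] H} {p : E} (hB : DifferentiableAt 𝕜 B p)
    (x : F) (y : G) (a : E) :
    fderiv 𝕜 (fun q => B q x y) p a = fderiv 𝕜 B p a x y := by
  rw [fderiv_clm_apply (hB.clm_apply (differentiableAt_const x)) (differentiableAt_const y),
    fderiv_clm_apply hB (differentiableAt_const x)]
  simp

theorem DifferentiableAt.bilinearComp {B : E → F →L[𝕜] G →L[𝕜] H} {L₁ : E → K →L[𝕜] F}
    {L₂ : E → K →L[𝕜] G} {p : E} (hB : DifferentiableAt 𝕜 B p) (h₁ : DifferentiableAt 𝕜 L₁ p)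
    (h₂ : DifferentiableAt 𝕜 L₂ p) :
    DifferentiableAt 𝕜 (fun q => (B q).bilinearComp (L₁ q) (L₂ q)) p := by
  -- `B.bilinearComp L₁ L₂ = ((compL 𝕜 K G H).flip L₂ ∘L B) ∘L L₁` holds by `rfl`.
  have h₂' : DifferentiableAt 𝕜 (fun q => (compL 𝕜 K G H).flip (L₂ q)) p :=
    DifferentiableAt.comp (g := (compL 𝕜 K G H).flip) p (ContinuousLinearMap.differentiableAt _) h₂
  exact (h₂'.clm_comp hB).clm_comp h₁

theorem fderiv_bilinearComp_apply {B : E → F →L[𝕜] G →L[𝕜] H} {L₁ : E → K →L[𝕜] F}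
    {L₂ : E → K →L[𝕜] G} {p : E} (hB : DifferentiableAt 𝕜 B p) (h₁ : DifferentiableAt 𝕜 L₁ p)
    (h₂ : DifferentiableAt 𝕜 L₂ p) (a : E) (x y : K) :
    fderiv 𝕜 (fun q => (B q).bilinearComp (L₁ q) (L₂ q)) p a x y
      = fderiv 𝕜 B p a (L₁ p x) (L₂ p y) + B p (fderiv 𝕜 L₁ p a x) (L₂ p y)
        + B p (L₁ p x) (fderiv 𝕜 L₂ p a y) := by
  rw [← fderiv_apply_apply (hB.bilinearComp h₁ h₂)]
  simp only [bilinearComp_apply]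
  have hx := h₁.hasFDerivAt.clm_apply (hasFDerivAt_const x p)
  have hy := h₂.hasFDerivAt.clm_apply (hasFDerivAt_const y p)
  rw [((hB.hasFDerivAt.clm_apply hx).clm_apply hy).fderiv]
  simp only [comp_zero, zero_add, flip_add, add_apply, comp_apply, flip_apply]
  abel

theorem fderiv_pullback_apply {f : E → F} {h : F → F →L[𝕜] F →L[𝕜] G}
    {g : E → E →L[𝕜] E →L[𝕜] G} {p : E} (hf : DifferentiableAt 𝕜 f p)
    (hDf : DifferentiableAt 𝕜 (fderiv 𝕜 f) p) (hh : DifferentiableAt 𝕜 h (f p))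
    (hg : ∀ᶠ q in nhds p, ∀ u v, g q u v = h (f q) (fderiv 𝕜 f q u) (fderiv 𝕜 f q v))
    (a b c : E) :
    fderiv 𝕜 g p a b c
      = fderiv 𝕜 h (f p) (fderiv 𝕜 f p a) (fderiv 𝕜 f p b) (fderiv 𝕜 f p c)
        + h (f p) (fderiv 𝕜 (fderiv 𝕜 f) p a b) (fderiv 𝕜 f p c)
        + h (f p) (fderiv 𝕜 f p b) (fderiv 𝕜 (fderiv 𝕜 f) p a c) := by
  have hg' : g =ᶠ[nhds p] fun q => (h (f q)).bilinearComp (fderiv 𝕜 f q) (fderiv 𝕜 f q) := by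
    filter_upwards [hg] with q hq
    ext u v
    exact hq u v
  have hhf : DifferentiableAt 𝕜 (fun q => h (f q)) p := hh.comp (g := h) p hf
  rw [hg'.fderiv_eq, fderiv_bilinearComp_apply hhf hDf hDf, fderiv_fun_comp (g := h) p hh hf]
  rfl

end ProductRule

section Koszul

variable {𝕜 E F : Type*} [Field 𝕜]

/-- For `D = Dg(p)`, the right-hand side of the Koszul formula for `g(p)(Γ(p)(u, v), w)`. -/
def koszul (D : E → E → E → 𝕜) (u v w : E) : 𝕜 := (1 / 2) * (D u v w + D v u w - D w u v)

theorem koszul_pullback [NeZero (2 : 𝕜)] {D : E → E → E → 𝕜} {T : F → F → F → 𝕜}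
    {B : F → F → 𝕜} {S : E → E → F} {L : E → F} (hB : ∀ x y, B x y = B y x)
    (hS : ∀ a b, S a b = S b a)
    (hD : ∀ a b c, D a b c = T (L a) (L b) (L c) + B (S a b) (L c) + B (L b) (S a c))
    (u v w : E) :
    koszul D u v w = koszul T (L u) (L v) (L w) + B (S u v) (L w) := by
  simp only [koszul, hD, hS v u, hS w u, hS w v, hB (S u w) (L v)]
  field_simp
  ring

end Koszul

theorem pullback_christoffel_koszul_general
    {E F : Type*}
    [NormedAddCommGroup E] [InnerProductSpace ℝ E]
    [NormedAddCommGroup F] [InnerProductSpace ℝ F]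
    (O : Set E) (V : Set F) (hO : IsOpen O) (hV : IsOpen V)
    (f : E → F) (hf : ContDiffOn ℝ (⊤ : ℕ∞) f O) (hfO : Set.MapsTo f O V)
    (h : F → (F →L[ℝ] F →L[ℝ] ℝ)) (hh : ContDiffOn ℝ (⊤ : ℕ∞) h V)
    (hhsymm : ∀ q ∈ V, ∀ a b : F, h q a b = h q b a)
    (g : E → (E →L[ℝ] E →L[ℝ] ℝ))
    (hgdef : ∀ p ∈ O, ∀ u v : E, g p u v = h (f p) (fderiv ℝ f p u) (fderiv ℝ f p v))
    (ΓM : E → (E →L[ℝ] E →L[ℝ] E))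
    (hKoszulM : ∀ p ∈ O, ∀ u v w : E,
      g p (ΓM p u v) w
        = (1 / 2) * ((fderiv ℝ g p u) v w + (fderiv ℝ g p v) u w - (fderiv ℝ g p w) u v))
    (ΓN : F → (F →L[ℝ] F →L[ℝ] F))
    (hKoszulN : ∀ q ∈ V, ∀ a b c : F,
      h q (ΓN q a b) c
        = (1 / 2) * ((fderiv ℝ h q a) b c + (fderiv ℝ h q b) a c - (fderiv ℝ h q c) a b)) :
    ∀ p ∈ O, ∀ u v w : E,
      g p (ΓM p u v) w
        = h (f p) (ΓN (f p) (fderiv ℝ f p u) (fderiv ℝ f p v)) (fderiv ℝ f p w)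
          + h (f p) (fderiv ℝ (fderiv ℝ f) p u v) (fderiv ℝ f p w) := by
  intro p hp u v w
  have hpO : O ∈ nhds p := hO.mem_nhds hp
  have hfp : f p ∈ V := hfO hp
  have hf_p : ContDiffAt ℝ (⊤ : ℕ∞) f p := hf.contDiffAt hpO
  have hDf : ContDiffOn ℝ (⊤ : ℕ∞) (fderiv ℝ f) O := hf.fderiv_of_isOpen hO le_rfl
  have hD2f_symm : ∀ a b : E, fderiv ℝ (fderiv ℝ f) p a b = fderiv ℝ (fderiv ℝ f) p b a :=
    hf_p.isSymmSndFDerivAt <| by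
      rw [minSmoothness_of_isRCLikeNormedField]; exact WithTop.coe_le_coe.mpr le_top
  have hDg := fderiv_pullback_apply (hf_p.differentiableAt (by simp))
    ((hDf.contDiffAt hpO).differentiableAt (by simp))
    ((hh.contDiffAt (hV.mem_nhds hfp)).differentiableAt (by simp))
    (Filter.eventually_of_mem hpO hgdef)
  rw [hKoszulM p hp, hKoszulN (f p) hfp]
  exact koszul_pullback (D := fun a b c => fderiv ℝ g p a b c)
    (T := fun x y z => fderiv ℝ h (f p) x y z) (L := fderiv ℝ f p)
    (hhsymm (f p) hfp) hD2f_symm hDg u v w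

/-- **Pullback of Levi-Civita Christoffel symbols along an immersion.**
If `f : O → V` is a smooth immersion between open subsets of real Hilbert spaces,
`h` is a smooth field of continuous symmetric bilinear forms on `V`, `g` is the
pullback of `h` along `f`, and `Γ_M`, `Γ_N` satisfy the Koszul formulas for `g`, `h`
respectively, then for all `p ∈ O` and `u v w ∈ E`:
`g p (Γ_M p u v) w = h (f p) (Γ_N (f p) (Df p u) (Df p v)) (Df p w) + h (f p) (D²f p (u,v)) (Df p w)`. -/
theorem pullback_christoffel_koszul
    {E F : Type*}
    [NormedAddCommGroup E] [InnerProductSpace ℝ E] [CompleteSpace E]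
    [NormedAddCommGroup F] [InnerProductSpace ℝ F] [CompleteSpace F]
    (O : Set E) (V : Set F) (hO : IsOpen O) (hV : IsOpen V)
    (f : E → F) (hf : ContDiffOn ℝ (⊤ : ℕ∞) f O) (hfO : Set.MapsTo f O V)
    (hImm : ∀ p ∈ O, Function.Injective (fderiv ℝ f p))
    (h : F → (F →L[ℝ] F →L[ℝ] ℝ)) (hh : ContDiffOn ℝ (⊤ : ℕ∞) h V)
    (hhsymm : ∀ q ∈ V, ∀ a b : F, h q a b = h q b a)
    (g : E → (E →L[ℝ] E →L[ℝ] ℝ))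
    (hgdef : ∀ p ∈ O, ∀ u v : E, g p u v = h (f p) (fderiv ℝ f p u) (fderiv ℝ f p v))
    (ΓM : E → (E →L[ℝ] E →L[ℝ] E)) (hΓM : ContDiffOn ℝ (⊤ : ℕ∞) ΓM O)
    (hΓMsymm : ∀ p ∈ O, ∀ u v : E, ΓM p u v = ΓM p v u)
    (hKoszulM : ∀ p ∈ O, ∀ u v w : E,
      g p (ΓM p u v) w
        = (1 / 2) * ((fderiv ℝ g p u) v w + (fderiv ℝ g p v) u w - (fderiv ℝ g p w) u v))
    (ΓN : F → (F →L[ℝ] F →L[ℝ] F)) (hΓN : ContDiffOn ℝ (⊤ : ℕ∞) ΓN V)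
    (hΓNsymm : ∀ q ∈ V, ∀ a b : F, ΓN q a b = ΓN q b a)
    (hKoszulN : ∀ q ∈ V, ∀ a b c : F,
      h q (ΓN q a b) c
        = (1 / 2) * ((fderiv ℝ h q a) b c + (fderiv ℝ h q b) a c - (fderiv ℝ h q c) a b)) :
    ∀ p ∈ O, ∀ u v w : E,
      g p (ΓM p u v) w
        = h (f p) (ΓN (f p) (fderiv ℝ f p u) (fderiv ℝ f p v)) (fderiv ℝ f p w)
          + h (f p) (fderiv ℝ (fderiv ℝ f) p u v) (fderiv ℝ f p w) :=
  pullback_christoffel_koszul_general O V hO hV f hf hfO h hh hhsymm g hgdef ΓM hKoszulM ΓN hKoszulN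
end

section
/- Assume the order-1 compatibility condition holds: for all x ∈ O and ξ, y ∈ E, Dg(x)(Γ_M(x)(ξ,y)) = D²g(x)(ξ,y) + Γ_N(g(x))(Dg(x)ξ, Dg(x)y). Fix (x, ξ_1, …, ξ_k) ∈ O × E^k and let μ̄ be the associated canonical curve. Then (g∘μ̄)(0) = g(x), (g∘μ̄)^(1)(0) = Dg(x)ξ_1, and for every 2 ≤ i ≤ k: (g∘μ̄)^(i)(0)/(i−1)! + N^1(v̄_1)·(g∘μ̄)^(i−1)(0)/(i−2)! + ⋯ + N^{i−1}(v̄_{i−1})·(g∘μ̄)^(1)(0) = i·Dg(x)ξ_i, where v̄_j = ( (g∘μ̄)(0), (g∘μ̄)^(1)(0), …, (1/j!)(g∘μ̄)^(j)(0) ). Consequently, in the adapted vector-bundle charts induced by the connections, the k-th order differential T^k g is represented by (x, ξ_1, …, ξ_k) ↦ (g(x), Dg(x)ξ_1, …, Dg(x)ξ_k), which is linear on fibres; i.e., T^k g is a vector bundle morphism. -/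
/-!
Along a curve `c` with Taylor coefficients `u m = c⁽ᵐ⁾/m!`, the recursion defining `M^i` says
exactly that `t ↦ M^i(c, u)` has derivative `(i+1) M^{i+1}(c, u) - Γ(c)(u 1) ∘ M^i(c, u)`.
Consequently the combinations `H_i = ∑_{j+m=i} M^j(c, u)(m u_m)` (with `M^0 = id`), which are `i`
times the fibre coordinates in the chart adapted to `Γ`, satisfy the linear recursion
`H_i' = i H_{i+1} - Γ(c)(u 1) H_i`. The compatibility condition says precisely that `Dg` intertwines
this recursion for `Γ_M` along `c` with the one for `Γ_N` along `g ∘ c`, so `H_i^N = Dg(c) H_i^M`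
by induction on `i`. The canonical curve is built so that `H_i^M(μ̄)(0) = i ξ_i`.
-/

/-- The induced connection-map components `M^i : O × E^i → L(E,E)` of a Christoffel
symbol `Γ`, defined recursively by `M^1(x,ξ₁)y = Γ x ξ₁ y` and, for `i ≥ 2`,
`M^i(x,ξ₁,…,ξ_i) = (1/i) • ( ∑_{j=1}^{i} D_j M^{i-1}(x,ξ₁,…,ξ_{i-1}) (j•ξ_j) + Γ x ξ₁ ∘ M^{i-1}(x,ξ₁,…,ξ_{i-1}) )`,
where `D_1` is the partial derivative in the `x`-argument (direction `1•ξ₁`) and, for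
`2 ≤ j ≤ i`, `D_j` is the partial derivative in the `ξ_{j-1}`-argument (direction `j•ξ_j`).
The tuple `(ξ₁,…,ξ_{i})` is encoded as a function `ξ : ℕ → E`; `M^i` only reads the
values `ξ 1, …, ξ i`. -/
noncomputable def inducedM {E : Type*} [NormedAddCommGroup E] [NormedSpace ℝ E]
    (Γ : E → (E →L[ℝ] E →L[ℝ] E)) : ℕ → E → (ℕ → E) → (E →L[ℝ] E)
  | 0, _, _ => 0
  | 1, x, ξ => Γ x (ξ 1)
  | (n + 2), x, ξ =>
      (((n + 2 : ℕ) : ℝ))⁻¹ •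
        ((fderiv ℝ (fun x' => inducedM Γ (n + 1) x' ξ) x) ((1 : ℝ) • ξ 1)
          + (∑ j ∈ Finset.Icc 2 (n + 2),
              (fderiv ℝ (fun v => inducedM Γ (n + 1) x (Function.update ξ (j - 1) v))
                  (ξ (j - 1))) ((j : ℝ) • ξ j))
          + (Γ x (ξ 1)).comp (inducedM Γ (n + 1) x ξ))

/-- The canonical curve `μ̄_k` associated to `(x, ξ₁, …, ξ_k)` and a Christoffel symbol
`Γ`: `μ̄₁ t = x + t•ξ₁`, and for `i ≥ 2`,
`μ̄_i t = μ̄_{i-1} t + (t^i/i) • ( i•ξ_i − ∑_{j=1}^{i-1} M^j(x, ξ₁, μ̄_{i-1}⁽²⁾(0)/2!, …, μ̄_{i-1}⁽ʲ⁾(0)/j!) (μ̄_{i-1}^{(i-j)}(0)/(i-j-1)!) )`. -/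
noncomputable def canonCurve {E : Type*} [NormedAddCommGroup E] [NormedSpace ℝ E]
    (Γ : E → (E →L[ℝ] E →L[ℝ] E)) (x : E) (ξ : ℕ → E) : ℕ → ℝ → E
  | 0 => fun _ => x
  | 1 => fun t => x + t • ξ 1
  | (n + 2) => fun t =>
      canonCurve Γ x ξ (n + 1) t
        + (t ^ (n + 2) / ((n + 2 : ℕ) : ℝ)) •
            ((((n + 2 : ℕ) : ℝ)) • ξ (n + 2)
              - ∑ j ∈ Finset.Icc 1 (n + 1),
                  (inducedM Γ j x
                      (fun m => ((Nat.factorial m : ℝ))⁻¹ •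
                        iteratedDeriv m (canonCurve Γ x ξ (n + 1)) 0))
                    (((Nat.factorial (n + 1 - j) : ℝ))⁻¹ •
                      iteratedDeriv (n + 2 - j) (canonCurve Γ x ξ (n + 1)) 0))

open Finset
open scoped ContDiff

section General

variable {𝕜 E G : Type*} [NontriviallyNormedField 𝕜] [NormedAddCommGroup E] [NormedSpace 𝕜 E]
  [NormedAddCommGroup G] [NormedSpace 𝕜 G]

theorem fderiv_apply_eq_zero_of_forall_add_smul_eq {f : E → G} {x v : E}
    (hf : DifferentiableAt 𝕜 f x) (h : ∀ t : 𝕜, f (x + t • v) = f x) : fderiv 𝕜 f x v = 0 := by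
  rw [← hf.lineDeriv_eq_fderiv, lineDeriv, funext h, deriv_const]

theorem fderiv_update_apply {ι : Type*} [Fintype ι] [DecidableEq ι] {f : (ι → E) → G}
    {v : ι → E} (hf : DifferentiableAt 𝕜 f v) (l : ι) (w : E) :
    fderiv 𝕜 (fun z => f (Function.update v l z)) (v l) w = fderiv 𝕜 f v (Pi.single l w) := by
  have h : HasFDerivAt f (fderiv 𝕜 f v) (Function.update v l (v l)) := by
    rw [Function.update_eq_self]; exact hf.hasFDerivAt
  have := (h.comp (v l) (hasFDerivAt_update v (v l))).fderiv
  simp only [Function.comp_def] at this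
  rw [this]
  refine congrArg (fderiv 𝕜 f v) (funext fun i => ?_)
  rcases eq_or_ne i l with rfl | hi <;> simp [*]

theorem hasDerivAt_sum_antidiagonal {A : ℕ → 𝕜 → E →L[𝕜] G} {u : ℕ → 𝕜 → E} {B : G →L[𝕜] G}
    {t : 𝕜} (hA : ∀ j, HasDerivAt (A j) (((j : 𝕜) + 1) • A (j + 1) t - B.comp (A j t)) t)
    (hu : ∀ m, HasDerivAt (u m) (((m : 𝕜) + 1) • u (m + 1) t) t) (i : ℕ) :
    HasDerivAt (fun τ => ∑ p ∈ antidiagonal i, A p.1 τ ((p.2 : 𝕜) • u p.2 τ))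
      ((i : 𝕜) • ∑ p ∈ antidiagonal (i + 1), A p.1 t ((p.2 : 𝕜) • u p.2 t)
        - B (∑ p ∈ antidiagonal i, A p.1 t ((p.2 : 𝕜) • u p.2 t))) t := by
  refine (HasDerivAt.fun_sum (u := antidiagonal i) (A := fun p τ => A p.1 τ ((p.2 : 𝕜) • u p.2 τ))
    fun p _ => (hA p.1).clm_apply ((hu p.2).const_smul (p.2 : 𝕜))).congr_deriv ?_
  -- on `antidiagonal (i + 1)`, `i * m = j * m + (m - 1) * m`; each part is a shifted copy of a
  -- sum over `antidiagonal i`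
  have hsplit : ∀ p ∈ antidiagonal (i + 1), (i : 𝕜) • A p.1 t ((p.2 : 𝕜) • u p.2 t)
      = ((p.1 : 𝕜) * p.2) • A p.1 t (u p.2 t) + (((p.2 : 𝕜) - 1) * p.2) • A p.1 t (u p.2 t) := by
    intro p hp
    have : ((i + 1 : ℕ) : 𝕜) = (p.1 + p.2 : ℕ) := congrArg _ (mem_antidiagonal.1 hp).symm
    push_cast at this
    rw [map_smul, smul_smul, ← add_smul]
    congr 1
    linear_combination (p.2 : 𝕜) * this
  rw [smul_sum, sum_congr rfl hsplit, sum_add_distrib (s := antidiagonal (i + 1)),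
    Nat.sum_antidiagonal_succ, Nat.sum_antidiagonal_succ', map_sum]
  simp only [Nat.cast_zero, zero_mul, mul_zero, zero_smul, zero_add]
  rw [← sum_add_distrib, ← sum_sub_distrib]
  refine sum_congr rfl fun p _ => ?_
  simp only [sub_apply, smul_apply, ContinuousLinearMap.comp_apply, map_smul, smul_smul]
  push_cast
  module

end General

section SeqOfFin

variable {α : Type*} [Zero α] {K : ℕ}

def seqOfFin (v : Fin K → α) (m : ℕ) : α := if h : m < K then v ⟨m, h⟩ else 0

theorem seqOfFin_of_lt (v : Fin K → α) {m : ℕ} (h : m < K) : seqOfFin v m = v ⟨m, h⟩ :=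
  dif_pos h

theorem seqOfFin_update (v : Fin K → α) (l : Fin K) (z : α) :
    seqOfFin (Function.update v l z) = Function.update (seqOfFin v) l z := by
  funext m
  by_cases hm : m < K
  · rw [seqOfFin_of_lt _ hm]
    rcases eq_or_ne m l with rfl | hml
    · simp
    · rw [Function.update_of_ne (by simpa [Fin.ext_iff] using hml), Function.update_of_ne hml,
        seqOfFin_of_lt _ hm]
  · have : m ≠ l := by omega
    simp [seqOfFin, hm, Function.update_of_ne this]

end SeqOfFin

section Jets

variable {F : Type*} [NormedAddCommGroup F] [NormedSpace ℝ F]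

section TaylorCoeff

noncomputable def taylorCoeff (c : ℝ → F) (m : ℕ) (t : ℝ) : F :=
  ((m.factorial : ℝ))⁻¹ • iteratedDeriv m c t

variable {c : ℝ → F} {s : Set ℝ} {t : ℝ}

@[simp]
theorem taylorCoeff_zero : taylorCoeff c 0 t = c t := by simp [taylorCoeff]

theorem taylorCoeff_one : taylorCoeff c 1 t = deriv c t := by simp [taylorCoeff]

theorem inv_factorial_smul_iteratedDeriv_succ (m : ℕ) :
    ((m.factorial : ℝ))⁻¹ • iteratedDeriv (m + 1) c t
      = ((m + 1 : ℕ) : ℝ) • taylorCoeff c (m + 1) t := by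
  rw [taylorCoeff, smul_smul, Nat.factorial_succ, Nat.cast_mul, mul_inv, ← mul_assoc,
    mul_inv_cancel₀ (by positivity), one_mul]

theorem hasDerivAt_taylorCoeff (hs : IsOpen s) (hc : ContDiffOn ℝ ∞ c s) (ht : t ∈ s) (m : ℕ) :
    HasDerivAt (taylorCoeff c m) (((m : ℝ) + 1) • taylorCoeff c (m + 1) t) t := by
  have hwithin : DifferentiableAt ℝ (iteratedDerivWithin m c s) t :=
    (hc.differentiableOn_iteratedDerivWithin (by exact_mod_cast WithTop.coe_lt_top _)
      hs.uniqueDiffOn t ht).differentiableAt (hs.mem_nhds ht)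
  have hd : DifferentiableAt ℝ (iteratedDeriv m c) t :=
    hwithin.congr_of_eventuallyEq (Filter.eventually_of_mem (hs.mem_nhds ht)
      fun _ hτ => (iteratedDerivWithin_of_isOpen hs hτ).symm)
  have := hd.hasDerivAt.const_smul ((m.factorial : ℝ))⁻¹
  rwa [← iteratedDeriv_succ, inv_factorial_smul_iteratedDeriv_succ, Nat.cast_succ] at this

theorem taylorCoeff_one_comp {G : Type*} [NormedAddCommGroup G] [NormedSpace ℝ G] {g : F → G}
    (hg : DifferentiableAt ℝ g (c t)) (hc : DifferentiableAt ℝ c t) :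
    taylorCoeff (fun τ => g (c τ)) 1 t = fderiv ℝ g (c t) (taylorCoeff c 1 t) := by
  simp only [taylorCoeff_one]
  exact (hg.hasFDerivAt.comp_hasDerivAt t hc.hasDerivAt).deriv

theorem taylorCoeff_add_monomial {m : ℕ} (hc : ContDiffAt ℝ m c 0) (p : ℕ) (w : F) :
    taylorCoeff (fun t => c t + t ^ p • w) m 0 = taylorCoeff c m 0 + if m = p then w else 0 := by
  rw [taylorCoeff, iteratedDeriv_fun_add hc (by fun_prop), iteratedDeriv_smul_const (by fun_prop),
    iteratedDeriv_fun_pow_zero, smul_add, ← taylorCoeff]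
  split_ifs with h
  · subst h
    rw [smul_smul, inv_mul_cancel₀ (by positivity), one_smul]
  · simp

end TaylorCoeff

section JointSmoothness

variable {K : ℕ}

theorem contDiff_seqOfFin (m : ℕ) : ContDiff ℝ ∞ fun v : Fin K → F => seqOfFin v m := by
  unfold seqOfFin
  split_ifs
  · exact contDiff_apply ℝ F _
  · exact contDiff_const

/-- If `v` lists the Taylor coefficients `u 0, …, u (K-1)` of a curve, then `jetShift v` lists
those of its derivative, `(l + 1) • u (l + 1)`, truncated to `0` in the last slot. -/
def jetShift (v : Fin K → F) : Fin K → F := fun l => ((l + 1 : ℕ) : ℝ) • seqOfFin v (l + 1)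

theorem contDiff_jetShift : ContDiff ℝ ∞ (jetShift : (Fin K → F) → Fin K → F) :=
  contDiff_pi.2 fun _ => (contDiff_seqOfFin _).const_smul _

theorem jetShift_apply_eq_single_add_sum {n : ℕ} (hn : n + 1 ≤ K) (v : Fin (K + 1) → F)
    {l : Fin (K + 1)} (hl : (l : ℕ) ≤ n + 1) :
    jetShift v l = (Pi.single 0 ((1 : ℝ) • seqOfFin v 1)
      + ∑ j ∈ Icc 2 (n + 2), Pi.single (Fin.ofNat (K + 1) (j - 1)) ((j : ℝ) • seqOfFin v j) :
        Fin (K + 1) → F) l := by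
  have hcond : ∀ j ∈ Icc 2 (n + 2), (l = Fin.ofNat (K + 1) (j - 1) ↔ j = l + 1) := by
    intro j hj
    rw [mem_Icc] at hj
    rw [Fin.ext_iff, Fin.val_ofNat, Nat.mod_eq_of_lt (by omega)]
    omega
  simp only [Pi.add_apply, Finset.sum_apply, Pi.single_apply, jetShift]
  rw [sum_congr rfl fun j hj => if_congr (hcond j hj) rfl rfl, sum_ite_eq']
  rcases eq_or_ne l 0 with rfl | hl0
  · simp
  · have : (l : ℕ) ≠ 0 := fun h => hl0 (Fin.ext h)
    rw [if_neg hl0, if_pos (mem_Icc.2 ⟨by omega, by omega⟩), zero_add]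

variable (Γ : F → F →L[ℝ] F →L[ℝ] F)

theorem inducedM_congr : ∀ {i : ℕ} (x : F) {ξ ξ' : ℕ → F},
    (∀ m, 1 ≤ m → m ≤ i → ξ m = ξ' m) → inducedM Γ i x ξ = inducedM Γ i x ξ'
  | 0, _, _, _, _ => rfl
  | 1, _, _, _, h => by simp only [inducedM, h 1 le_rfl le_rfl]
  | n + 2, x, ξ, ξ', h => by
    have ih : ∀ x {η η' : ℕ → F}, (∀ m, 1 ≤ m → m ≤ n + 1 → η m = η' m) →
        inducedM Γ (n + 1) x η = inducedM Γ (n + 1) x η' := fun x _ _ h => inducedM_congr x h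
    have h' : ∀ m, 1 ≤ m → m ≤ n + 1 → ξ m = ξ' m := fun m h1 h2 => h m h1 (by omega)
    simp only [inducedM, h 1 le_rfl (by omega), ih _ h']
    congr 3
    refine sum_congr rfl fun j hj => ?_
    rw [mem_Icc] at hj
    rw [h j (by omega) hj.2, h (j - 1) (by omega) (by omega)]
    congr 2
    funext z
    refine ih _ fun m hm1 hm2 => ?_
    rcases eq_or_ne m (j - 1) with rfl | hm
    · simp
    · simp only [Function.update_of_ne hm, h' m hm1 hm2]

/-- `M^i` as a function on the normed space `Fin (K + 1) → F`: slot `0` holds the base point and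
slot `m ≥ 1` the argument `ξ m`, so that the partial derivatives in the recursion for `M^{i+1}`
become partial derivatives of one map. -/
noncomputable def inducedMFin (i : ℕ) (v : Fin (K + 1) → F) : F →L[ℝ] F :=
  inducedM Γ i (v 0) (seqOfFin v)

theorem fderiv_inducedMFin_apply_congr {i : ℕ} {v : Fin (K + 1) → F}
    (hd : DifferentiableAt ℝ (inducedMFin Γ i) v) {w w' : Fin (K + 1) → F}
    (h : ∀ l : Fin (K + 1), (l : ℕ) ≤ i → w l = w' l) :
    fderiv ℝ (inducedMFin Γ i) v w = fderiv ℝ (inducedMFin Γ i) v w' := by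
  rw [← sub_eq_zero, ← map_sub]
  refine fderiv_apply_eq_zero_of_forall_add_smul_eq hd fun t => ?_
  have hw : ∀ l : Fin (K + 1), (l : ℕ) ≤ i → (v + t • (w - w')) l = v l := fun l hl => by
    simp [h l hl]
  show inducedM Γ i _ _ = inducedM Γ i _ _
  rw [hw 0 (Nat.zero_le _)]
  refine inducedM_congr Γ _ fun m _ hm => ?_
  by_cases hmK : m < K + 1
  · simp only [seqOfFin_of_lt _ hmK, hw ⟨m, hmK⟩ hm]
  · simp [seqOfFin, hmK]

theorem inducedMFin_add_two {n : ℕ} (hn : n + 1 ≤ K) {v : Fin (K + 1) → F}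
    (hd : DifferentiableAt ℝ (inducedMFin Γ (n + 1)) v) :
    inducedMFin Γ (n + 2) v = ((n + 2 : ℕ) : ℝ)⁻¹ •
      (fderiv ℝ (inducedMFin Γ (n + 1)) v (jetShift v)
        + (Γ (v 0) (seqOfFin v 1)).comp (inducedMFin Γ (n + 1) v)) := by
  set D := fderiv ℝ (inducedMFin Γ (n + 1)) v
  have hx : (fun x' => inducedM Γ (n + 1) x' (seqOfFin v))
      = fun z => inducedMFin Γ (n + 1) (Function.update v 0 z) := by
    funext z
    simp only [inducedMFin, Function.update_self, seqOfFin_update]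
    exact inducedM_congr Γ z fun m hm _ => (Function.update_of_ne (by simp; omega) _ _).symm
  have hslot : ∀ j ∈ Icc 2 (n + 2),
      fderiv ℝ (fun z => inducedM Γ (n + 1) (v 0) (Function.update (seqOfFin v) (j - 1) z))
          (seqOfFin v (j - 1)) ((j : ℝ) • seqOfFin v j)
        = D (Pi.single (Fin.ofNat (K + 1) (j - 1)) ((j : ℝ) • seqOfFin v j)) := by
    intro j hj
    rw [mem_Icc] at hj
    have hj1 : (Fin.ofNat (K + 1) (j - 1) : ℕ) = j - 1 := Nat.mod_eq_of_lt (by omega)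
    have : (fun z => inducedM Γ (n + 1) (v 0) (Function.update (seqOfFin v) (j - 1) z))
        = fun z => inducedMFin Γ (n + 1) (Function.update v (Fin.ofNat (K + 1) (j - 1)) z) := by
      funext z
      rw [inducedMFin, seqOfFin_update, hj1, Function.update_of_ne]
      simp only [ne_eq, Fin.ext_iff, hj1, Fin.val_zero]
      omega
    rw [this, ← fderiv_update_apply hd, seqOfFin_of_lt v (show j - 1 < K + 1 by omega)]
    congr
    exact (Nat.mod_eq_of_lt (by omega)).symm
  have hsum : D (jetShift v) = D (Pi.single 0 ((1 : ℝ) • seqOfFin v 1))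
      + ∑ j ∈ Icc 2 (n + 2),
          D (Pi.single (Fin.ofNat (K + 1) (j - 1)) ((j : ℝ) • seqOfFin v j)) := by
    rw [← map_sum, ← map_add]
    exact fderiv_inducedMFin_apply_congr Γ hd fun l hl => jetShift_apply_eq_single_add_sum hn v hl
  rw [inducedMFin, inducedM, hx, fderiv_update_apply hd, sum_congr rfl hslot, hsum]
  rfl

theorem contDiffOn_inducedMFin {O : Set F} (hO : IsOpen O) (hΓ : ContDiffOn ℝ ∞ Γ O) :
    ∀ {i : ℕ}, i ≤ K → ContDiffOn ℝ ∞ (inducedMFin Γ (K := K) i) {v | v 0 ∈ O}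
  | 0, _ => contDiffOn_const
  | 1, _ => (hΓ.comp (contDiff_apply ℝ F 0).contDiffOn fun _ hv => hv).clm_apply
      (contDiff_seqOfFin 1).contDiffOn
  | n + 2, hn => by
    have ih := contDiffOn_inducedMFin hO hΓ (i := n + 1) (by omega)
    have hU : IsOpen {v : Fin (K + 1) → F | v 0 ∈ O} := hO.preimage (continuous_apply 0)
    refine ((((ih.fderiv_of_isOpen hU (by simp)).clm_apply contDiff_jetShift.contDiffOn).add
      (((hΓ.comp (contDiff_apply ℝ F 0).contDiffOn fun _ hv => hv).clm_apply
        (contDiff_seqOfFin 1).contDiffOn).clm_comp ih)).const_smul ((n + 2 : ℕ) : ℝ)⁻¹).congr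
      fun v hv => ?_
    exact inducedMFin_add_two Γ (by omega)
      ((ih.differentiableOn (by simp) v hv).differentiableAt (hU.mem_nhds hv))

theorem hasDerivAt_inducedM_taylorCoeff {O : Set F} (hO : IsOpen O) (hΓ : ContDiffOn ℝ ∞ Γ O)
    {c : ℝ → F} {s : Set ℝ} (hs : IsOpen s) (hc : ContDiffOn ℝ ∞ c s) (hcO : Set.MapsTo c s O)
    {t : ℝ} (ht : t ∈ s) (n : ℕ) :
    HasDerivAt (fun τ => inducedM Γ (n + 1) (c τ) (taylorCoeff c · τ))
      (((n + 2 : ℕ) : ℝ) • inducedM Γ (n + 2) (c t) (taylorCoeff c · t)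
        - (Γ (c t) (taylorCoeff c 1 t)).comp (inducedM Γ (n + 1) (c t) (taylorCoeff c · t))) t := by
  set V : ℝ → Fin (n + 3) → F := fun τ l => taylorCoeff c l τ
  have hV : ∀ τ, ∀ i ≤ n + 2, inducedM Γ i (c τ) (taylorCoeff c · τ) = inducedMFin Γ i (V τ) := by
    intro τ i hi
    simp only [inducedMFin, V, Fin.val_zero, taylorCoeff_zero]
    exact inducedM_congr Γ _ fun m _ hm => (seqOfFin_of_lt (V τ) (by omega)).symm
  have hd : DifferentiableAt ℝ (inducedMFin Γ (n + 1)) (V t) :=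
    ((contDiffOn_inducedMFin Γ hO hΓ (by omega)).differentiableOn (by simp) _
      (by simpa [V] using hcO ht)).differentiableAt
      ((hO.preimage (continuous_apply 0)).mem_nhds (by simpa [V] using hcO ht))
  have hchain := hd.hasFDerivAt.comp_hasDerivAt t
    (hasDerivAt_pi.2 fun l => hasDerivAt_taylorCoeff hs hc ht l)
  rw [fderiv_inducedMFin_apply_congr Γ hd (w' := jetShift (V t)) fun l hl => by
    simp [jetShift, V, seqOfFin_of_lt (V t) (show (l : ℕ) + 1 < n + 3 by omega)]] at hchain
  have hB : Γ (V t 0) (seqOfFin (V t) 1) = Γ (c t) (taylorCoeff c 1 t) := by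
    simp [V, seqOfFin_of_lt (V t) (show 1 < n + 3 by omega)]
  rw [funext fun τ => hV τ (n + 1) (by omega), hV t (n + 2) le_rfl, hV t (n + 1) (by omega),
    inducedMFin_add_two Γ (n := n) (by omega) hd, hB, smul_smul,
    mul_inv_cancel₀ (by positivity), one_smul, add_sub_cancel_right]
  exact hchain

end JointSmoothness

section AdaptedCoord

variable (Γ : F → F →L[ℝ] F →L[ℝ] F)

/-- `M^j`, but with `M^0 = id` in place of `inducedM Γ 0 = 0`, so that the leading term `i • u i`
of `adaptedCoord` is the `j = 0` summand. -/
noncomputable def inducedMOrId (j : ℕ) (x : F) (ξ : ℕ → F) : F →L[ℝ] F :=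
  if j = 0 then ContinuousLinearMap.id ℝ F else inducedM Γ j x ξ

/-- `i` times the `i`-th fibre coordinate, in the chart adapted to `Γ`, of the jet with base point
`u 0` and Taylor coefficients `u 1, u 2, …`. -/
noncomputable def adaptedCoord (u : ℕ → F) (i : ℕ) : F :=
  ∑ p ∈ antidiagonal i, inducedMOrId Γ p.1 (u 0) u ((p.2 : ℝ) • u p.2)

theorem adaptedCoord_one (u : ℕ → F) : adaptedCoord Γ u 1 = u 1 := by
  simp [adaptedCoord, inducedMOrId, Nat.sum_antidiagonal_succ]

theorem adaptedCoord_eq_add_sum (u : ℕ → F) (i : ℕ) :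
    adaptedCoord Γ u i = (i : ℝ) • u i
      + ∑ j ∈ Icc 1 (i - 1), inducedM Γ j (u 0) u (((i - j : ℕ) : ℝ) • u (i - j)) := by
  rw [adaptedCoord, Nat.sum_antidiagonal_eq_sum_range_succ_mk, sum_range_succ', add_comm]
  simp only [inducedMOrId, if_pos, Nat.sub_zero, ContinuousLinearMap.id_apply,
    Nat.add_one_ne_zero, if_false]
  congr 1
  rcases i with _ | n
  · simp
  · rw [sum_range_succ, Nat.sub_self, Nat.cast_zero, zero_smul, map_zero, add_zero, range_eq_Ico,
      sum_Ico_add' (fun j => inducedM Γ j (u 0) u (((n + 1 - j : ℕ) : ℝ) • u (n + 1 - j))) 0 n 1,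
      zero_add, Ico_add_one_right_eq_Icc, Nat.add_sub_cancel]

theorem adaptedCoord_eq_of_lt {u u' : ℕ → F} {i : ℕ} (h : ∀ m < i, u' m = u m) :
    adaptedCoord Γ u' i = adaptedCoord Γ u i + (i : ℝ) • (u' i - u i) := by
  rcases i.eq_zero_or_pos with rfl | hi
  · simp [adaptedCoord]
  rw [adaptedCoord_eq_add_sum, adaptedCoord_eq_add_sum, h 0 hi]
  have hsum : ∀ j ∈ Icc 1 (i - 1), inducedM Γ j (u 0) u' (((i - j : ℕ) : ℝ) • u' (i - j))
      = inducedM Γ j (u 0) u (((i - j : ℕ) : ℝ) • u (i - j)) := by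
    intro j hj
    rw [mem_Icc] at hj
    rw [inducedM_congr Γ _ fun m _ hm => h m (by omega), h (i - j) (by omega)]
  rw [sum_congr rfl hsum]
  module

theorem adaptedCoord_taylorCoeff (c : ℝ → F) (t : ℝ) {i : ℕ} (hi : 1 ≤ i) :
    adaptedCoord Γ (taylorCoeff c · t) i
      = ((i - 1).factorial : ℝ)⁻¹ • iteratedDeriv i c t
        + ∑ j ∈ Icc 1 (i - 1), inducedM Γ j (c t) (taylorCoeff c · t)
            (((i - j - 1).factorial : ℝ)⁻¹ • iteratedDeriv (i - j) c t) := by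
  obtain ⟨n, rfl⟩ : ∃ n, i = n + 1 := ⟨i - 1, by omega⟩
  rw [adaptedCoord_eq_add_sum, taylorCoeff_zero, Nat.add_sub_cancel,
    inv_factorial_smul_iteratedDeriv_succ]
  refine congrArg _ (sum_congr rfl fun j hj => ?_)
  rw [mem_Icc] at hj
  rw [show n + 1 - j = n - j + 1 by omega, Nat.add_sub_cancel,
    inv_factorial_smul_iteratedDeriv_succ]

theorem hasDerivAt_adaptedCoord {O : Set F} (hO : IsOpen O) (hΓ : ContDiffOn ℝ ∞ Γ O)
    {c : ℝ → F} {s : Set ℝ} (hs : IsOpen s) (hc : ContDiffOn ℝ ∞ c s) (hcO : Set.MapsTo c s O)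
    {t : ℝ} (ht : t ∈ s) (i : ℕ) :
    HasDerivAt (fun τ => adaptedCoord Γ (taylorCoeff c · τ) i)
      ((i : ℝ) • adaptedCoord Γ (taylorCoeff c · t) (i + 1)
        - Γ (c t) (taylorCoeff c 1 t) (adaptedCoord Γ (taylorCoeff c · t) i)) t := by
  simp only [adaptedCoord, taylorCoeff_zero]
  refine hasDerivAt_sum_antidiagonal
    (A := fun j τ => inducedMOrId Γ j (c τ) (taylorCoeff c · τ)) (fun j => ?_)
    (hasDerivAt_taylorCoeff hs hc ht) i
  rcases j with _ | n
  · simpa [inducedMOrId, inducedM] using hasDerivAt_const t (ContinuousLinearMap.id ℝ F)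
  · simp only [inducedMOrId, Nat.add_one_ne_zero, if_false]
    convert hasDerivAt_inducedM_taylorCoeff Γ hO hΓ hs hc hcO ht n using 2
    push_cast; congr 1; ring

end AdaptedCoord

theorem adaptedCoord_comp {G : Type*} [NormedAddCommGroup G] [NormedSpace ℝ G]
    {O : Set F} {O' : Set G} (hO : IsOpen O) (hO' : IsOpen O') {g : F → G}
    (hg : ContDiffOn ℝ ∞ g O) (hmaps : Set.MapsTo g O O')
    {ΓM : F → F →L[ℝ] F →L[ℝ] F} (hΓM : ContDiffOn ℝ ∞ ΓM O)
    {ΓN : G → G →L[ℝ] G →L[ℝ] G} (hΓN : ContDiffOn ℝ ∞ ΓN O')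
    (hcompat : ∀ x ∈ O, ∀ ξ y : F,
      fderiv ℝ g x (ΓM x ξ y)
        = fderiv ℝ (fderiv ℝ g) x ξ y + ΓN (g x) (fderiv ℝ g x ξ) (fderiv ℝ g x y))
    {c : ℝ → F} {s : Set ℝ} (hs : IsOpen s) (hc : ContDiffOn ℝ ∞ c s) (hcO : Set.MapsTo c s O)
    {i : ℕ} (hi : 1 ≤ i) {t : ℝ} (ht : t ∈ s) :
    adaptedCoord ΓN (taylorCoeff (fun τ => g (c τ)) · t) i
      = fderiv ℝ g (c t) (adaptedCoord ΓM (taylorCoeff c · t) i) := by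
  have hgd : ∀ τ ∈ s, DifferentiableAt ℝ g (c τ) := fun τ hτ =>
    (hg.differentiableOn (by simp) _ (hcO hτ)).differentiableAt (hO.mem_nhds (hcO hτ))
  have hcd : ∀ τ ∈ s, DifferentiableAt ℝ c τ := fun τ hτ =>
    (hc.differentiableOn (by simp) τ hτ).differentiableAt (hs.mem_nhds hτ)
  induction i, hi using Nat.le_induction generalizing t with
  | base => rw [adaptedCoord_one, adaptedCoord_one, taylorCoeff_one_comp (hgd t ht) (hcd t ht)]
  | succ n hn ih =>
    have hD2g : HasFDerivAt (fderiv ℝ g) (fderiv ℝ (fderiv ℝ g) (c t)) (c t) :=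
      (((hg.fderiv_of_isOpen hO (m := ∞) (by simp)).differentiableOn (by simp) _
        (hcO ht)).differentiableAt (hO.mem_nhds (hcO ht))).hasFDerivAt
    have hc' : HasDerivAt c (taylorCoeff c 1 t) t := by
      rw [taylorCoeff_one]; exact (hcd t ht).hasDerivAt
    have hM := (hD2g.comp_hasDerivAt t hc').clm_apply
      (hasDerivAt_adaptedCoord ΓM hO hΓM hs hc hcO ht n)
    have hN := hasDerivAt_adaptedCoord ΓN hO' hΓN hs (c := fun τ => g (c τ)) (hg.comp hc hcO)
      (hmaps.comp hcO) ht n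
    -- differentiate the induction hypothesis at `t`: the compatibility condition turns the
    -- second-derivative term of `Dg` into the `Γ_N` term
    have key := hN.unique (hM.congr_of_eventuallyEq
      (Filter.eventually_of_mem (hs.mem_nhds ht) fun τ hτ => ih hτ))
    simp only [Function.comp_apply] at key
    rw [map_sub, map_smul, hcompat _ (hcO ht), ← ih ht,
      ← taylorCoeff_one_comp (hgd t ht) (hcd t ht)] at key
    refine smul_right_injective G (show (n : ℝ) ≠ 0 by positivity) ?_
    linear_combination (norm := module) key

section CanonCurve

variable (Γ : F → F →L[ℝ] F →L[ℝ] F) (x : F) (ξ : ℕ → F)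

theorem canonCurve_succ : ∀ n : ℕ, ∃ w : F,
    canonCurve Γ x ξ (n + 1) = fun t => canonCurve Γ x ξ n t + t ^ (n + 1) • w
  | 0 => ⟨ξ 1, by funext t; simp [canonCurve]⟩
  | _ + 1 => ⟨_, by funext t; rw [canonCurve]; beta_reduce; rw [div_eq_mul_inv, mul_smul]⟩

theorem contDiff_canonCurve : ∀ n, ContDiff ℝ ∞ (canonCurve Γ x ξ n)
  | 0 => contDiff_const
  | n + 1 => by
    obtain ⟨w, hw⟩ := canonCurve_succ Γ x ξ n
    rw [hw]
    exact (contDiff_canonCurve n).add ((contDiff_id.pow _).smul contDiff_const)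

theorem taylorCoeff_canonCurve_succ (n m : ℕ) : ∃ w : F,
    taylorCoeff (canonCurve Γ x ξ (n + 1)) m 0
      = taylorCoeff (canonCurve Γ x ξ n) m 0 + if m = n + 1 then w else 0 := by
  obtain ⟨w, hw⟩ := canonCurve_succ Γ x ξ n
  exact ⟨w, by rw [hw, taylorCoeff_add_monomial
    (contDiff_infty.1 (contDiff_canonCurve Γ x ξ n) m).contDiffAt]⟩

theorem taylorCoeff_canonCurve_of_lt {n m : ℕ} (h : n < m) :
    taylorCoeff (canonCurve Γ x ξ n) m 0 = 0 := by
  induction n with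
  | zero => simp [taylorCoeff, canonCurve, iteratedDeriv_const, show m ≠ 0 by omega]
  | succ n ih =>
    obtain ⟨w, hw⟩ := taylorCoeff_canonCurve_succ Γ x ξ n m
    rw [hw, ih (by omega), if_neg (by omega), add_zero]

theorem taylorCoeff_canonCurve_of_le {m n n' : ℕ} (hm : m ≤ n) (hn : n ≤ n') :
    taylorCoeff (canonCurve Γ x ξ n') m 0 = taylorCoeff (canonCurve Γ x ξ n) m 0 := by
  induction n', hn using Nat.le_induction with
  | base => rfl
  | succ n' _ ih =>
    obtain ⟨w, hw⟩ := taylorCoeff_canonCurve_succ Γ x ξ n' m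
    rw [hw, ih, if_neg (by omega), add_zero]

theorem canonCurve_apply_zero (n : ℕ) : canonCurve Γ x ξ n 0 = x := by
  rw [← taylorCoeff_zero (c := canonCurve Γ x ξ n),
    taylorCoeff_canonCurve_of_le Γ x ξ le_rfl (Nat.zero_le n), taylorCoeff_zero, canonCurve]

theorem taylorCoeff_canonCurve_one {k : ℕ} (hk : 1 ≤ k) :
    taylorCoeff (canonCurve Γ x ξ k) 1 0 = ξ 1 := by
  have h1 : canonCurve Γ x ξ 1 = fun t => canonCurve Γ x ξ 0 t + t ^ 1 • ξ 1 := by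
    funext t; simp [canonCurve]
  rw [taylorCoeff_canonCurve_of_le Γ x ξ le_rfl hk, h1,
    taylorCoeff_add_monomial (contDiff_infty.1 (contDiff_canonCurve Γ x ξ 0) 1).contDiffAt,
    taylorCoeff_canonCurve_of_lt Γ x ξ zero_lt_one, if_pos rfl, zero_add]

theorem adaptedCoord_canonCurve {i k : ℕ} (hi : 2 ≤ i) (hik : i ≤ k) :
    adaptedCoord Γ (taylorCoeff (canonCurve Γ x ξ k) · 0) i = (i : ℝ) • ξ i := by
  obtain ⟨n, rfl⟩ : ∃ n, i = n + 2 := ⟨i - 2, by omega⟩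
  set μ := canonCurve Γ x ξ (n + 1)
  set S := ∑ j ∈ Icc 1 (n + 1), inducedM Γ j x (taylorCoeff μ · 0)
    (((n + 1 - j).factorial : ℝ)⁻¹ • iteratedDeriv (n + 2 - j) μ 0)
  set w : F := ((n + 2 : ℕ) : ℝ)⁻¹ • (((n + 2 : ℕ) : ℝ) • ξ (n + 2) - S)
  have hμ : canonCurve Γ x ξ (n + 2) = fun t => μ t + t ^ (n + 2) • w := by
    funext t; rw [canonCurve]; beta_reduce; rw [div_eq_mul_inv, mul_smul]; rfl
  -- the correction term in the definition of `canonCurve` is the adapted coordinate of `μ`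
  have hS : S = adaptedCoord Γ (taylorCoeff μ · 0) (n + 2) := by
    rw [adaptedCoord_taylorCoeff Γ μ 0 (by omega), show n + 2 - 1 = n + 1 from rfl,
      inv_factorial_smul_iteratedDeriv_succ, taylorCoeff_canonCurve_of_lt Γ x ξ (by omega),
      smul_zero, zero_add, show μ 0 = x from canonCurve_apply_zero Γ x ξ _]
    refine sum_congr rfl fun j hj => ?_
    rw [show n + 2 - j - 1 = n + 1 - j by omega]
  have htop : ∀ m, taylorCoeff (canonCurve Γ x ξ (n + 2)) m 0
      = taylorCoeff μ m 0 + if m = n + 2 then w else 0 := fun m => by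
    rw [hμ, taylorCoeff_add_monomial (contDiff_infty.1 (contDiff_canonCurve Γ x ξ _) m).contDiffAt]
  calc adaptedCoord Γ (taylorCoeff (canonCurve Γ x ξ k) · 0) (n + 2)
      = adaptedCoord Γ (taylorCoeff (canonCurve Γ x ξ (n + 2)) · 0) (n + 2) := by
        rw [adaptedCoord_eq_of_lt Γ fun m hm => taylorCoeff_canonCurve_of_le Γ x ξ hm.le hik,
          taylorCoeff_canonCurve_of_le Γ x ξ le_rfl hik, sub_self, smul_zero, add_zero]
    _ = S + ((n + 2 : ℕ) : ℝ) • w := by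
        rw [adaptedCoord_eq_of_lt Γ fun m hm => by rw [htop, if_neg hm.ne, add_zero], htop,
          if_pos rfl, add_sub_cancel_left, hS]
    _ = ((n + 2 : ℕ) : ℝ) • ξ (n + 2) := by
        rw [smul_smul, mul_inv_cancel₀ (by positivity), one_smul, add_sub_cancel]

end CanonCurve

end Jets

/-- **`T^k g` is linear on fibres in the adapted charts.**
Assume the order-1 compatibility condition for `Γ_M`, `Γ_N` along `g`. For the canonical
curve `μ̄` associated to `(x, ξ₁, …, ξ_k)`: `(g∘μ̄)(0) = g x`, `(g∘μ̄)'(0) = Dg(x)ξ₁`, and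
for every `2 ≤ i ≤ k`
`(g∘μ̄)^(i)(0)/(i−1)! + N^1(v̄₁)(g∘μ̄)^(i−1)(0)/(i−2)! + ⋯ + N^{i−1}(v̄_{i−1})(g∘μ̄)^(1)(0) = i • Dg(x)ξ_i`;
hence in the adapted vector-bundle charts `T^k g` is represented by
`(x,ξ₁,…,ξ_k) ↦ (g x, Dg(x)ξ₁, …, Dg(x)ξ_k)`, a vector bundle morphism. -/
theorem Tkg_vector_bundle_morphism
    {E E' : Type*} [NormedAddCommGroup E] [NormedSpace ℝ E]
    [NormedAddCommGroup E'] [NormedSpace ℝ E']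
    (O : Set E) (O' : Set E') (hO : IsOpen O) (hO' : IsOpen O')
    (g : E → E') (hg : ContDiffOn ℝ (⊤ : ℕ∞) g O) (hmaps : Set.MapsTo g O O')
    (ΓM : E → (E →L[ℝ] E →L[ℝ] E)) (hΓM : ContDiffOn ℝ (⊤ : ℕ∞) ΓM O)
    (ΓN : E' → (E' →L[ℝ] E' →L[ℝ] E')) (hΓN : ContDiffOn ℝ (⊤ : ℕ∞) ΓN O')
    (hcompat : ∀ x ∈ O, ∀ ξ y : E,
      fderiv ℝ g x (ΓM x ξ y)
        = fderiv ℝ (fderiv ℝ g) x ξ y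
          + ΓN (g x) (fderiv ℝ g x ξ) (fderiv ℝ g x y))
    (k : ℕ) (hk : 1 ≤ k) (x : E) (hx : x ∈ O) (ξ : ℕ → E) :
    let μ : ℝ → E := canonCurve ΓM x ξ k
    let vbar : ℕ → E' := fun m =>
      ((Nat.factorial m : ℝ))⁻¹ • iteratedDeriv m (fun t => g (μ t)) 0
    (g (μ 0) = g x) ∧
    (deriv (fun t => g (μ t)) 0 = fderiv ℝ g x (ξ 1)) ∧
    (∀ i : ℕ, 2 ≤ i → i ≤ k →
      ((Nat.factorial (i - 1) : ℝ))⁻¹ • iteratedDeriv i (fun t => g (μ t)) 0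
        + (∑ j ∈ Finset.Icc 1 (i - 1),
            inducedM ΓN j (g (μ 0)) vbar
              (((Nat.factorial (i - j - 1) : ℝ))⁻¹ • iteratedDeriv (i - j) (fun t => g (μ t)) 0))
        = (i : ℝ) • fderiv ℝ g x (ξ i)) := by
  intro μ vbar
  have hμ0 : μ 0 = x := canonCurve_apply_zero ΓM x ξ k
  have hs : IsOpen (μ ⁻¹' O) := hO.preimage (contDiff_canonCurve ΓM x ξ k).continuous
  have h0 : (0 : ℝ) ∈ μ ⁻¹' O := by simpa [Set.mem_preimage, hμ0] using hx
  have hμs : ContDiffOn ℝ ∞ μ (μ ⁻¹' O) := (contDiff_canonCurve ΓM x ξ k).contDiffOn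
  have hnat := fun {i} (hi : 1 ≤ i) =>
    adaptedCoord_comp hO hO' hg hmaps hΓM hΓN hcompat hs hμs (fun _ h => h) hi h0
  refine ⟨by rw [hμ0], ?_, fun i hi hik => ?_⟩
  · have h1 := hnat le_rfl
    rwa [adaptedCoord_one, adaptedCoord_one, taylorCoeff_one, hμ0,
      taylorCoeff_canonCurve_one ΓM x ξ hk] at h1
  · have hi' := hnat (i := i) (by omega)
    rw [hμ0]
    rwa [adaptedCoord_taylorCoeff ΓN _ 0 (by omega), adaptedCoord_canonCurve ΓM x ξ hi hik, hμ0,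
      map_smul] at hi'
end
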